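/- Let σ : ℝ → ℝ be defined by σ(x) = 2·exp(x)/(1 + exp(x)). For every x < 0 and every α ∈ (0, 1], there exists a unique y > 0 such that α·σ(x) = σ(y·x). -/
import Mathlib


noncomputable def sigmaFn (x : ℝ) : ℝ := 2 * Real.exp x / (1 + Real.exp x)

lemma sigmaFn_inj {a b : ℝ} (h : sigmaFn a = sigmaFn b) : a = b := by
  unfold sigmaFn at h
  have ha : (0:ℝ) < 1 + Real.exp a := by positivity
  have hb : (0:ℝ) < 1 + Real.exp b := by positivity
  have := Real.exp_pos a
  have := Real.exp_pos b
  field_simp at h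
  have : Real.exp a = Real.exp b := by nlinarith
  exact Real.exp_injective this

theorem exists_unique_rescaling (x : ℝ) (hx : x < 0) (α : ℝ) (hα0 : 0 < α) (hα1 : α ≤ 1) :
    ∃! y : ℝ, 0 < y ∧ α * sigmaFn x = sigmaFn (y * x) := by
  have hxne : x ≠ 0 := ne_of_lt hx
  set c : ℝ := α * sigmaFn x with hc
  have hex : Real.exp x < 1 := Real.exp_lt_one_iff.mpr hx
  have hexp : (0:ℝ) < Real.exp x := Real.exp_pos x
  have hden : (0:ℝ) < 1 + Real.exp x := by positivity
  have hs0 : 0 < sigmaFn x := by unfold sigmaFn; positivity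
  have hs1 : sigmaFn x < 1 := by
    unfold sigmaFn
    rw [div_lt_one hden]; linarith
  have hc0 : 0 < c := mul_pos hα0 hs0
  have hc1 : c < 1 := lt_of_le_of_lt (by nlinarith) hs1
  have h2c : (0:ℝ) < 2 - c := by linarith
  have hr0 : 0 < c / (2 - c) := div_pos hc0 h2c
  have hr1 : c / (2 - c) < 1 := by rw [div_lt_one h2c]; linarith
  have hlog : Real.log (c / (2 - c)) < 0 := Real.log_neg hr0 hr1
  have hval : sigmaFn (Real.log (c / (2 - c))) = c := by
    unfold sigmaFn
    rw [Real.exp_log hr0]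
    rw [div_eq_iff (by positivity)]
    field_simp
    ring
  refine ⟨Real.log (c / (2 - c)) / x, ⟨div_pos_of_neg_of_neg hlog hx, ?_⟩, ?_⟩
  · rw [div_mul_cancel₀ _ hxne, hval]
  · rintro y ⟨hy, hyeq⟩
    have h1 : y * x = Real.log (c / (2 - c)) :=
      sigmaFn_inj (hyeq.symm.trans hval.symm)
    rw [eq_div_iff hxne]
    exact h1
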